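/- arXiv:2409.00928 — 3 statements merged into one kernel-verified Lean document; each statement's English description precedes it below -/
import Mathlib

section
/- Let h : ℝ → [0, 1/2] be C² with h ≥ 0, let β ∈ (0, 2^{-7}], s ∈ (0,1), and define ψ(y) = s + β·exp(-(√s + h(y))^{-1/2}). If (h')² + |h''| ≤ 1 pointwise, then ψ·|ψ''| ≤ 4β pointwise. -/
/-!
With `x = (√s + h)^(-1/2)` one has `ψ = s + β e^{-x}` and
`ψ'' = β e^{-x} ((x⁶/4 - 3x⁵/4) h'² + x³/2 h'')`, so everything reduces to the bounds
`xⁿ e^{-x} ≤ (n/e)ⁿ`. In `ψ |ψ''|` the term `β² e^{-x} |…|` is small because `β ≤ 2⁻⁷`,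
while in `s |ψ''|` the high powers of `x` are absorbed by `s x⁴ ≤ 1`, which holds since
`√s + h ≥ √s`.
-/

open Real

theorem pow_le_div_exp_one_pow_mul_exp (n : ℕ) {x : ℝ} (hx : 0 ≤ x) :
    x ^ n ≤ (n / exp 1) ^ n * exp x := by
  rcases n.eq_zero_or_pos with rfl | hn
  · simpa using one_le_exp hx
  have hn' : (0 : ℝ) < n := Nat.cast_pos.2 hn
  have hlin : x ≤ n / exp 1 * exp (x / n) := by
    have := add_one_le_exp (x / n - 1)
    rw [exp_sub, sub_add_cancel, le_div_iff₀ (exp_pos 1)] at this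
    rw [div_mul_eq_mul_div, le_div_iff₀ (exp_pos 1)]
    calc x * exp 1 = n * (x / n * exp 1) := by field_simp
      _ ≤ n * exp (x / n) := by gcongr
  calc x ^ n ≤ (n / exp 1 * exp (x / n)) ^ n := pow_le_pow_left₀ hx hlin n
    _ = (n / exp 1) ^ n * exp x := by
      rw [mul_pow, ← exp_nat_mul, mul_div_cancel₀ x hn'.ne']

theorem pow_mul_exp_neg_le_of_le {n : ℕ} {x c : ℝ} (hx : 0 ≤ x) (hc : (n / 2.7) ^ n ≤ c) :
    x ^ n * exp (-x) ≤ c := by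
  have he : (n / exp 1) ^ n ≤ (n / 2.7) ^ n := by
    have := exp_one_gt_d9
    gcongr
    linarith
  rw [exp_neg, ← div_eq_mul_inv, div_le_iff₀ (exp_pos x)]
  calc x ^ n ≤ (n / exp 1) ^ n * exp x := pow_le_div_exp_one_pow_mul_exp n hx
    _ ≤ c * exp x := by gcongr; linarith

theorem HasDerivAt.inv_sqrt {a : ℝ → ℝ} {a' t : ℝ} (ha : HasDerivAt a a' t) (hpos : 0 < a t) :
    HasDerivAt (fun t => (√(a t))⁻¹) (-((√(a t))⁻¹ ^ 3 * a' / 2)) t := by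
  refine ((ha.sqrt hpos.ne').inv (sqrt_pos.2 hpos).ne').congr_deriv ?_
  field_simp

theorem hasDerivAt_exp_neg_inv_sqrt {a : ℝ → ℝ} {a' t : ℝ} (ha : HasDerivAt a a' t)
    (hpos : 0 < a t) :
    HasDerivAt (fun t => exp (-(√(a t))⁻¹))
      (exp (-(√(a t))⁻¹) * ((√(a t))⁻¹ ^ 3 * a' / 2)) t := by
  simpa using (ha.inv_sqrt hpos).neg.exp

theorem deriv_deriv_const_add_mul_exp_neg_inv_sqrt {a : ℝ → ℝ} (hpos : ∀ t, 0 < a t)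
    (ha : Differentiable ℝ a) (ha' : Differentiable ℝ (deriv a)) (c β y : ℝ) :
    deriv (deriv fun t => c + β * exp (-1 / √(a t))) y =
      β * (exp (-(√(a y))⁻¹) * (((√(a y))⁻¹ ^ 6 / 4 - 3 * (√(a y))⁻¹ ^ 5 / 4) * deriv a y ^ 2
        + (√(a y))⁻¹ ^ 3 / 2 * deriv (deriv a) y)) := by
  set X : ℝ → ℝ := fun t => (√(a t))⁻¹
  have hX : ∀ t, HasDerivAt X (-(X t ^ 3 * deriv a t / 2)) t :=
    fun t => (ha t).hasDerivAt.inv_sqrt (hpos t)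
  have hψ' : deriv (fun t => c + β * exp (-1 / √(a t))) =
      fun t => β * (exp (-X t) * (X t ^ 3 * deriv a t / 2)) := by
    funext t
    simp only [neg_div, one_div]
    exact (((hasDerivAt_exp_neg_inv_sqrt (ha t).hasDerivAt (hpos t)).const_mul β).const_add c).deriv
  rw [hψ']
  have hψ'' := (((hX y).neg.exp).mul ((((hX y).pow 3).mul (ha' y).hasDerivAt).div_const 2)).const_mul β
  refine hψ''.deriv.trans ?_
  simp only [X, Pi.neg_apply, Pi.pow_apply, Pi.mul_apply]
  ring

theorem mul_abs_le_four_mul {s β x p q : ℝ} (hs0 : 0 ≤ s) (hs1 : s ≤ 1)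
    (hsx : s * x ^ 4 ≤ 1) (hβ0 : 0 ≤ β) (hβ : β ≤ 1 / 2 ^ 7) (hx : 0 ≤ x)
    (hpq : p ^ 2 + |q| ≤ 1) :
    (s + β * exp (-x)) * |β * (exp (-x) * ((x ^ 6 / 4 - 3 * x ^ 5 / 4) * p ^ 2 + x ^ 3 / 2 * q))|
      ≤ 4 * β := by
  set E := exp (-x)
  have hE0 : 0 < E := exp_pos _
  have hE1 : E ≤ 1 := exp_le_one_iff.2 (neg_nonpos.2 hx)
  have hu : p ^ 2 ≤ 1 := by linarith [abs_nonneg q]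
  have hv : |q| ≤ 1 := by linarith [sq_nonneg p]
  have h6 : x ^ 6 * E ≤ 125 := pow_mul_exp_neg_le_of_le hx (by norm_num)
  have h5 : x ^ 5 * E ≤ 22 := pow_mul_exp_neg_le_of_le hx (by norm_num)
  have h3 : x ^ 3 * E ≤ 2 := pow_mul_exp_neg_le_of_le hx (by norm_num)
  have h2 : x ^ 2 * E ≤ 1 := pow_mul_exp_neg_le_of_le hx (by norm_num)
  have h1 : x ^ 1 * E ≤ 1 := pow_mul_exp_neg_le_of_le hx (by norm_num)
  have hQ : |(x ^ 6 / 4 - 3 * x ^ 5 / 4) * p ^ 2 + x ^ 3 / 2 * q|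
      ≤ (x ^ 6 / 4 + 3 * x ^ 5 / 4) * p ^ 2 + x ^ 3 / 2 * |q| := by
    calc _ ≤ |(x ^ 6 / 4 - 3 * x ^ 5 / 4) * p ^ 2| + |x ^ 3 / 2 * q| := abs_add_le _ _
      _ ≤ _ := by
        rw [abs_mul, abs_mul, abs_of_nonneg (sq_nonneg p), abs_of_nonneg (by positivity : 0 ≤ x ^ 3 / 2)]
        gcongr
        rw [abs_le]; constructor <;> nlinarith [pow_nonneg hx 5, pow_nonneg hx 6]
  set R := E * ((x ^ 6 / 4 + 3 * x ^ 5 / 4) * p ^ 2 + x ^ 3 / 2 * |q|)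
  have habs : |β * (E * ((x ^ 6 / 4 - 3 * x ^ 5 / 4) * p ^ 2 + x ^ 3 / 2 * q))| ≤ β * R := by
    rw [abs_mul, abs_mul, abs_of_nonneg hβ0, abs_of_pos hE0]
    exact mul_le_mul_of_nonneg_left (mul_le_mul_of_nonneg_left hQ hE0.le) hβ0
  have hR : R ≤ 64 := calc
    R = x ^ 6 * E / 4 * p ^ 2 + 3 * (x ^ 5 * E) / 4 * p ^ 2 + x ^ 3 * E / 2 * |q| := by ring
    _ ≤ 125 / 4 * 1 + 3 * 22 / 4 * 1 + 2 / 2 * 1 := by gcongr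
    _ ≤ 64 := by norm_num
  have hsR : s * R ≤ 2 := calc
    s * R = s * x ^ 4 * (x ^ 2 * E) / 4 * p ^ 2 + 3 * (s * x ^ 4 * (x ^ 1 * E)) / 4 * p ^ 2
        + s * (x ^ 3 * E) / 2 * |q| := by ring
    _ ≤ 1 * 1 / 4 * 1 + 3 * (1 * 1) / 4 * 1 + 1 * 2 / 2 * 1 := by gcongr
    _ = 2 := by norm_num
  calc (s + β * E) * |β * (E * ((x ^ 6 / 4 - 3 * x ^ 5 / 4) * p ^ 2 + x ^ 3 / 2 * q))|
      ≤ (s + β * E) * (β * R) := by gcongr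
    _ = β * (s * R) + β * E * (β * R) := by ring
    _ ≤ β * 2 + β * 1 * (1 / 2 ^ 7 * 64) := by
      have : 0 ≤ R := by positivity
      gcongr
    _ ≤ 4 * β := by linarith

theorem stmt_13 (h : ℝ → ℝ) (hC2 : ContDiff ℝ 2 h)
    (hrange : ∀ y : ℝ, h y ∈ Set.Icc (0 : ℝ) (1 / 2))
    (β s : ℝ) (hβ0 : 0 < β) (hβ : β ≤ 1 / 2 ^ 7) (hs0 : 0 < s) (hs1 : s < 1)
    (hder : ∀ y : ℝ, (deriv h y) ^ 2 + |deriv (deriv h) y| ≤ 1) :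
    ∀ y : ℝ,
      (s + β * Real.exp (-1 / Real.sqrt (Real.sqrt s + h y)))
        * |deriv (deriv (fun t => s + β * Real.exp (-1 / Real.sqrt (Real.sqrt s + h t)))) y|
      ≤ 4 * β := by
  intro y
  have hpos : ∀ t, 0 < √s + h t := fun t => add_pos_of_pos_of_nonneg (sqrt_pos.2 hs0) (hrange t).1
  have hda : deriv (fun t => √s + h t) = deriv h := deriv_const_add' _
  rw [deriv_deriv_const_add_mul_exp_neg_inv_sqrt hpos
    ((hC2.differentiable (by norm_num)).const_add _) (hda ▸ hC2.differentiable_deriv_two), hda,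
    neg_div, one_div]
  have hsx : s * (√(√s + h y))⁻¹ ^ 4 ≤ 1 := by
    have hsA : s ≤ (√s + h y) ^ 2 := by
      nlinarith [sq_sqrt hs0.le, sqrt_nonneg s, (hrange y).1]
    rw [inv_pow, show 4 = 2 * 2 from rfl, pow_mul, sq_sqrt (hpos y).le, ← div_eq_mul_inv,
      div_le_one (pow_pos (hpos y) 2)]
    exact hsA
  exact mul_abs_le_four_mul hs0.le hs1.le hsx hβ0.le hβ (by positivity) (hder y)
end

section
/- Let ε ∈ (0,1), β ∈ (0,1), and h : ℝ → [0,∞). Then for every y, (h(y) + √ε)/(ε + β·exp(-(h(y)+√ε)^{-1/2})) ≥ (1/2)·min{1/β, 1/√ε}. -/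
/-!
Write `x = h y + √ε` and `ε + β e^{-1/√x} = √ε · √ε + β · e^{-1/√x}`. Since
`min (1/a) (1/b) · (a u + b v) ≤ u + v`, the denominator times `min (1/β) (1/√ε)` is at most
`√ε + e^{-1/√x} ≤ 2x`: here `√ε ≤ x` trivially, and `e^{-1/√x} ≤ x` follows from `2t ≤ eᵗ`
at `t = 1/(2√x)`.
-/

open Real

lemma min_inv_mul_add_le {a b u v : ℝ} (ha : 0 < a) (hb : 0 < b) (hu : 0 ≤ u) (hv : 0 ≤ v) :
    min a⁻¹ b⁻¹ * (a * u + b * v) ≤ u + v := by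
  have hau : min a⁻¹ b⁻¹ * (a * u) ≤ u := by
    calc min a⁻¹ b⁻¹ * (a * u) ≤ a⁻¹ * (a * u) := by gcongr; exact min_le_left _ _
      _ = u := by field_simp
  have hbv : min a⁻¹ b⁻¹ * (b * v) ≤ v := by
    calc min a⁻¹ b⁻¹ * (b * v) ≤ b⁻¹ * (b * v) := by gcongr; exact min_le_right _ _
      _ = v := by field_simp
  rw [mul_add]
  exact add_le_add hau hbv

lemma exp_neg_one_div_sqrt_le {x : ℝ} (hx : 0 < x) : exp (-1 / √x) ≤ x := by
  set s := √x
  have hs : 0 < s := sqrt_pos.mpr hx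
  have hhalf : 1 / s ≤ exp (1 / (2 * s)) := by
    have := two_mul_le_exp (x := 1 / (2 * s))
    rwa [show 2 * (1 / (2 * s)) = 1 / s by field_simp] at this
  calc exp (-1 / s) = (exp (1 / (2 * s)) ^ 2)⁻¹ := by
        rw [sq, ← exp_add, ← exp_neg]; congr 1; field_simp; norm_num
    _ ≤ ((1 / s) ^ 2)⁻¹ := by gcongr
    _ = x := by rw [one_div, inv_pow, inv_inv, sq_sqrt hx.le]

theorem stmt_16 (ε β : ℝ) (hε : ε ∈ Set.Ioo (0 : ℝ) 1) (hβ : β ∈ Set.Ioo (0 : ℝ) 1)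
    (h : ℝ → ℝ) (hnn : ∀ y : ℝ, 0 ≤ h y) :
    ∀ y : ℝ,
      (h y + Real.sqrt ε) / (ε + β * Real.exp (-1 / Real.sqrt (h y + Real.sqrt ε)))
        ≥ (1 / 2) * min (1 / β) (1 / Real.sqrt ε) := by
  intro y
  obtain ⟨hε0, -⟩ := hε
  obtain ⟨hβ0, -⟩ := hβ
  set x := h y + √ε
  set E := exp (-1 / √x)
  have hsε : 0 < √ε := sqrt_pos.mpr hε0
  have hεx : √ε ≤ x := le_add_of_nonneg_left (hnn y)
  have hEx : E ≤ x := exp_neg_one_div_sqrt_le (hsε.trans_le hεx)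
  rw [ge_iff_le, le_div_iff₀ (by positivity)]
  calc 1 / 2 * min (1 / β) (1 / √ε) * (ε + β * E)
      = 1 / 2 * (min β⁻¹ (√ε)⁻¹ * (β * E + √ε * √ε)) := by
        rw [mul_self_sqrt hε0.le, add_comm (β * E)]; simp only [one_div]; ring
    _ ≤ 1 / 2 * (E + √ε) := by gcongr; exact min_inv_mul_add_le hβ0 hsε (exp_pos _).le hsε.le
    _ ≤ x := by linarith
end

section
/- Fix m ≥ 1, set κ₁ = 1/(2m+3) and κ₂ = 4m/(2m+3), and let g : [r₀, ∞) → (-∞, 1/2] (with r₀ > 0) be a C¹ solution of the ODE (m + 1 + (2 - g(r))^{-1})·g'(r) = -2m·g(r)/r. Then the quantity (2 - g(r))^{-κ₁}·g(r)·r^{κ₂} is constant in r; equivalently, (2 - g(r))^{-κ₁} g(r) = (2 - g(r₀))^{-κ₁} g(r₀) · (r₀/r)^{κ₂} for all r ≥ r₀. -/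
/-! With `κ₁ = 1/(2m+3)` and `κ₂ = 4m/(2m+3)`, the product rule gives for
`F(r) = (2 - g)^(-κ₁) g r^κ₂` that `F' = (2 - g)^(-κ₁) r^κ₂ (g' + κ₁ g g'/(2 - g) + κ₂ g/r)`.
Multiplied by `(2m+3)(2 - g)`, the bracket becomes `2 ((m + 1)(2 - g) + 1) g' + 4m g (2 - g)/r`,
which is twice the ODE cleared of denominators. So `F' = 0`, and `F` is constant on `[r₀, ∞)` by
the mean value theorem. -/

open Set

noncomputable def odeInvariant (m : ℝ) (g : ℝ → ℝ) (r : ℝ) : ℝ :=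
  (2 - g r) ^ (-(1 / (2 * m + 3))) * g r * r ^ (4 * m / (2 * m + 3))

theorem eq_of_forall_hasDerivAt_zero {E : Type*} [NormedAddCommGroup E] [NormedSpace ℝ E]
    {f : ℝ → E} {a b : ℝ} (hab : a ≤ b) (hf : ∀ x ∈ Icc a b, HasDerivAt f 0 x) : f b = f a :=
  constant_of_has_deriv_right_zero (fun x hx ↦ (hf x hx).continuousAt.continuousWithinAt)
    (fun x hx ↦ (hf x (Ico_subset_Icc_self hx)).hasDerivWithinAt) b (right_mem_Icc.2 hab)

theorem hasDerivAt_odeInvariant {m r g' : ℝ} {g : ℝ → ℝ} (hm : 2 * m + 3 ≠ 0) (hg : g r < 2)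
    (hr : 0 < r) (hgd : HasDerivAt g g' r)
    (hode : (m + 1 + (2 - g r)⁻¹) * g' = -2 * m * g r / r) :
    HasDerivAt (odeInvariant m g) 0 r := by
  have hgr : 0 < 2 - g r := by linarith
  have hF := ((((hasDerivAt_const r (2 : ℝ)).sub hgd).rpow_const
    (p := -(1 / (2 * m + 3))) (Or.inl hgr.ne')).mul hgd).mul
    (Real.hasDerivAt_rpow_const (p := 4 * m / (2 * m + 3)) (Or.inl hr.ne'))
  refine hF.congr_deriv ?_
  simp only [Pi.sub_apply, Pi.mul_apply]
  rw [Real.rpow_sub hgr, Real.rpow_sub hr, Real.rpow_one, Real.rpow_one]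
  generalize (2 - g r) ^ (-(1 / (2 * m + 3))) = P
  generalize r ^ (4 * m / (2 * m + 3)) = Q
  field_simp at hode
  field_simp
  linear_combination (2 * P * Q) * hode

theorem stmt_19 (m : ℝ) (hm : 1 ≤ m) (r₀ : ℝ) (hr₀ : 0 < r₀)
    (g g' : ℝ → ℝ) (hrange : ∀ r : ℝ, r₀ ≤ r → g r ≤ 1 / 2)
    (hderiv : ∀ r : ℝ, r₀ ≤ r → HasDerivAt g (g' r) r)
    (hODE : ∀ r : ℝ, r₀ ≤ r →
      (m + 1 + (2 - g r)⁻¹) * g' r = -2 * m * g r / r) :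
    ∀ r : ℝ, r₀ ≤ r →
      (2 - g r) ^ (-(1 / (2 * m + 3)) : ℝ) * g r * r ^ ((4 * m / (2 * m + 3)) : ℝ)
        = (2 - g r₀) ^ (-(1 / (2 * m + 3)) : ℝ) * g r₀ * r₀ ^ ((4 * m / (2 * m + 3)) : ℝ) ∧
      (2 - g r) ^ (-(1 / (2 * m + 3)) : ℝ) * g r
        = (2 - g r₀) ^ (-(1 / (2 * m + 3)) : ℝ) * g r₀ * (r₀ / r) ^ ((4 * m / (2 * m + 3)) : ℝ) := by
  intro r hr
  have hK : 2 * m + 3 ≠ 0 := by linarith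
  have hconst : odeInvariant m g r = odeInvariant m g r₀ :=
    eq_of_forall_hasDerivAt_zero hr fun s hs ↦
      hasDerivAt_odeInvariant hK (by linarith [hrange s hs.1]) (hr₀.trans_le hs.1)
        (hderiv s hs.1) (hODE s hs.1)
  have hrpos : 0 < r := hr₀.trans_le hr
  refine ⟨hconst, ?_⟩
  rw [Real.div_rpow hr₀.le hrpos.le, ← mul_div_assoc,
    eq_div_iff (Real.rpow_pos_of_pos hrpos _).ne']
  exact hconst
end
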